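/- With LRM(r,m) defined recursively via the Plotkin construction as above, for all 0 ≤ r ≤ m the minimum Lee distance of LRM(r,m) equals 2^{m−r}. -/
import Mathlib


/-- Lee weight on ℤ₄: w_L(0)=0, w_L(1)=w_L(3)=1, w_L(2)=2. -/
def leeW : ZMod 4 → ℕ := fun a => if a = 0 then 0 else if a = 2 then 2 else 1

/-- Lee weight of a vector: sum of coordinate Lee weights. -/
def leeWt {ι : Type*} [Fintype ι] (x : ι → ZMod 4) : ℕ := ∑ i, leeW (x i)

/-- β component of the Gray map: β(0)=β(1)=0, β(2)=β(3)=1. -/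
def grayβ : ZMod 4 → ZMod 2 := fun a => if a = 0 ∨ a = 1 then 0 else 1

/-- γ component of the Gray map: γ(0)=γ(3)=0, γ(1)=γ(2)=1. -/
def grayγ : ZMod 4 → ZMod 2 := fun a => if a = 0 ∨ a = 3 then 0 else 1

/-- The Gray map φ(x) = (β(x), γ(x)), coded with index set ι ⊕ ι for ℤ₂²ⁿ. -/
def gray {ι : Type*} (x : ι → ZMod 4) : ι ⊕ ι → ZMod 2 :=
  Sum.elim (fun i => grayβ (x i)) (fun i => grayγ (x i))

/-- `LRM r m` is the quaternary code `𝓛𝓡𝓜(r, m+1)` of the paper, of length `2^m`,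
with coordinates indexed by `Fin m → ZMod 2`.  `LRM 0 0 = {0, (2)}`, `LRM (r+1) 0 = ℤ₄`,
and for m ≥ 1 it is given by the Plotkin construction
`{(x, x+y) : x ∈ LRM r m, y ∈ LRM (r-1) m}`, where `LRM (-1) m` is read as the zero
code (giving the repetition-style case `r = 0`). -/
def LRM : ℕ → (m : ℕ) → Set ((Fin m → ZMod 2) → ZMod 4)
  | 0, 0 => {0, fun _ => 2}
  | _ + 1, 0 => Set.univ
  | 0, m + 1 => {z | ∃ x ∈ LRM 0 m, z = fun v => x (Fin.init v)}
  | r + 1, m + 1 => {z | ∃ x ∈ LRM (r + 1) m, ∃ y ∈ LRM r m,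
      z = fun v => if v (Fin.last m) = 0 then x (Fin.init v)
                   else x (Fin.init v) + y (Fin.init v)}

lemma leeW_eq_zero : ∀ a : ZMod 4, leeW a = 0 ↔ a = 0 := by decide

lemma leeW_triangle : ∀ a b : ZMod 4, leeW b ≤ leeW a + leeW (a + b) := by decide

lemma leeWt_eq_zero {ι : Type*} [Fintype ι] {x : ι → ZMod 4} :
    leeWt x = 0 ↔ x = 0 := by
  simp [leeWt, Finset.sum_eq_zero_iff, leeW_eq_zero, funext_iff]

lemma leeWt_zero {ι : Type*} [Fintype ι] : leeWt (0 : ι → ZMod 4) = 0 := by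
  simp [leeWt, leeW]

lemma leeWt_triangle {ι : Type*} [Fintype ι] (x y : ι → ZMod 4) :
    leeWt y ≤ leeWt x + leeWt (x + y) := by
  rw [leeWt, leeWt, leeWt, ← Finset.sum_add_distrib]
  exact Finset.sum_le_sum fun i _ => leeW_triangle (x i) (y i)

lemma sum_zmod2 (f : ZMod 2 → ℕ) : ∑ b, f b = f 0 + f 1 := by
  have h : (Finset.univ : Finset (ZMod 2)) = {0, 1} := by decide
  rw [h, Finset.sum_insert (by decide), Finset.sum_singleton]

def snocEquiv (m : ℕ) : (Fin m → ZMod 2) × ZMod 2 ≃ (Fin (m+1) → ZMod 2) where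
  toFun := fun p => Fin.snoc p.1 p.2
  invFun := fun v => (Fin.init v, v (Fin.last m))
  left_inv := fun p => by simp
  right_inv := fun v => by simp

lemma leeWt_split {m : ℕ} (z : (Fin (m+1) → ZMod 2) → ZMod 4) :
    leeWt z = leeWt (fun u => z (Fin.snoc u 0)) + leeWt (fun u => z (Fin.snoc u 1)) := by
  have e := snocEquiv m
  show (∑ v, leeW (z v)) = _
  calc ∑ v, leeW (z v)
      = ∑ p : (Fin m → ZMod 2) × ZMod 2, leeW (z (snocEquiv m p)) := (Equiv.sum_comp (snocEquiv m) _).symm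
    _ = ∑ u, ∑ b : ZMod 2, leeW (z (Fin.snoc u b)) := by
        rw [Fintype.sum_prod_type]
        rfl
    _ = ∑ u, (leeW (z (Fin.snoc u 0)) + leeW (z (Fin.snoc u 1))) :=
        Finset.sum_congr rfl fun u _ => sum_zmod2 _
    _ = _ := Finset.sum_add_distrib

lemma rep_split {m : ℕ} (x : (Fin m → ZMod 2) → ZMod 4) :
    leeWt (fun v : Fin (m+1) → ZMod 2 => x (Fin.init v)) = leeWt x + leeWt x := by
  rw [leeWt_split]
  congr 1 <;> exact congrArg leeWt (by funext u; simp)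

lemma plotkin_split {m : ℕ} (x y : (Fin m → ZMod 2) → ZMod 4) :
    leeWt (fun v : Fin (m+1) → ZMod 2 => if v (Fin.last m) = 0 then x (Fin.init v)
      else x (Fin.init v) + y (Fin.init v)) = leeWt x + leeWt (x + y) := by
  rw [leeWt_split]
  congr 1
  · exact congrArg leeWt (by funext u; simp)
  · exact congrArg leeWt (by funext u; simp)

lemma LRM_zero_mem : ∀ (m r : ℕ), (0 : (Fin m → ZMod 2) → ZMod 4) ∈ LRM r m := by
  intro m
  induction m with
  | zero =>
    intro r
    cases r with
    | zero => exact Or.inl rfl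
    | succ r => trivial
  | succ m ih =>
    intro r
    cases r with
    | zero => exact ⟨0, ih 0, rfl⟩
    | succ r =>
      exact ⟨0, ih _, 0, ih _, by funext v; by_cases h : v (Fin.last m) = 0 <;> simp [h]⟩

lemma LRM_isLeast (m : ℕ) :
    ∀ r, IsLeast {w | ∃ z ∈ LRM r m, z ≠ 0 ∧ w = leeWt z} (2 ^ (m + 1 - r)) := by
  induction m with
  | zero =>
    intro r
    cases r with
    | zero =>
      constructor
      · exact ⟨fun _ => 2, Or.inr rfl, by decide, by decide⟩
      · rintro w ⟨z, hz, hzne, rfl⟩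
        rcases hz with rfl | rfl
        · exact absurd rfl hzne
        · decide
    | succ r =>
      constructor
      · refine ⟨fun _ => 1, trivial, by decide, ?_⟩
        have h1 : (0:ℕ) + 1 - (r+1) = 0 := by omega
        rw [h1]; decide
      · rintro w ⟨z, -, hzne, rfl⟩
        have h0 : leeWt z ≠ 0 := fun h => hzne (leeWt_eq_zero.mp h)
        have h1 : (0:ℕ) + 1 - (r+1) = 0 := by omega
        rw [h1]
        omega
  | succ m ih =>
    intro r
    cases r with
    | zero =>
      obtain ⟨⟨x, hx, hxne, hxw⟩, hlb⟩ := ih 0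
      have hx2 : leeWt x = 2 ^ (m + 1) := by simpa using hxw.symm
      constructor
      · refine ⟨fun v => x (Fin.init v), ⟨x, hx, rfl⟩, ?_, ?_⟩
        · intro h
          apply hxne
          funext u
          have := congrFun h (Fin.snoc u 0)
          simpa using this
        · rw [rep_split, hx2]
          simp only [Nat.sub_zero]
          ring
      · rintro w ⟨z, hz, hzne, rfl⟩
        obtain ⟨x', hx', rfl⟩ := hz
        have hx'ne : x' ≠ 0 := by
          rintro rfl
          exact hzne (funext fun v => rfl)
        have h1 : 2 ^ (m + 1 - 0) ≤ leeWt x' := hlb ⟨x', hx', hx'ne, rfl⟩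
        rw [rep_split]
        simp only [Nat.sub_zero] at *
        have h2 : (2:ℕ) ^ (m + 1 + 1) = 2 ^ (m+1) + 2 ^ (m+1) := by ring
        omega
    | succ r =>
      have key : (m + 1) + 1 - (r + 1) = m + 1 - r := by omega
      constructor
      · obtain ⟨⟨y, hy, hyne, hyw⟩, -⟩ := ih r
        refine ⟨fun v => if v (Fin.last m) = 0 then
            (0 : (Fin m → ZMod 2) → ZMod 4) (Fin.init v)
          else (0 : (Fin m → ZMod 2) → ZMod 4) (Fin.init v) + y (Fin.init v),
          ⟨0, LRM_zero_mem m (r+1), y, hy, rfl⟩, ?_, ?_⟩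
        · intro h
          apply hyne
          funext u
          have := congrFun h (Fin.snoc u 1)
          simpa using this
        · rw [plotkin_split, leeWt_zero, zero_add, zero_add, key]
          exact hyw
      · rintro w ⟨z, hz, hzne, rfl⟩
        obtain ⟨x, hx, y, hy, rfl⟩ := hz
        rw [plotkin_split, key]
        by_cases hy0 : y = 0
        · subst hy0
          have hxne : x ≠ 0 := by
            rintro rfl
            exact hzne (by funext v; by_cases h : v (Fin.last m) = 0 <;> simp [h])
          have h1 : 2 ^ (m + 1 - (r + 1)) ≤ leeWt x := (ih (r+1)).2 ⟨x, hx, hxne, rfl⟩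
          rw [add_zero]
          have h2 : (2:ℕ) ^ (m + 1 - r) ≤ 2 ^ (m + 1 - (r + 1)) * 2 := by
            rw [← pow_succ]
            exact Nat.pow_le_pow_right (by norm_num) (by omega)
          omega
        · have h1 : 2 ^ (m + 1 - r) ≤ leeWt y := (ih r).2 ⟨y, hy, hy0, rfl⟩
          have h2 := leeWt_triangle x y
          omega


/-- For 0 ≤ r ≤ m (here the paper's `m` is `m+1`), the minimum Lee distance of
`LRM(r,m)` equals `2^{m-r}`. -/
theorem LRM_minLeeDist (m r : ℕ) (hr : r ≤ m + 1) :
    IsLeast {w | ∃ z ∈ LRM r m, z ≠ 0 ∧ w = leeWt z} (2 ^ (m + 1 - r)) := LRM_isLeast m r
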